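/- arXiv:2407.17285 — 2 statements merged into one kernel-verified Lean document; each statement's English description precedes it below -/
import Mathlib

section
/- Let x̄ ∈ F be a locally optimal solution of (MPSC). Assume that x̄ is an S-stationary point of (MPSC) and that MPSC-SSOCQ holds at x̄. Then MPSC-SSONC holds at x̄: for every multiplier vector (λ, ρ, μ, ν) satisfying the S-stationarity system at x̄ and every d ∈ C^MPSC_F(x̄), one has dᵀ∇²ℓ(x̄)d ≥ 0, where ℓ := f + Σ_i λ_i g_i + Σ_j ρ_j h_j + Σ_k μ_k G_k + Σ_k ν_k H_k. -/
open Set Filter Topology Metric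

noncomputable section

namespace MPSC

abbrev Vec (n : ℕ) := EuclideanSpace ℝ (Fin n)

variable {n m p l : ℕ}

open scoped Classical in
/-- Sum of a function over an index set (finite ambient type). -/
noncomputable def sumOver {α β : Type*} [Fintype α] [AddCommMonoid β]
    (S : Set α) (v : α → β) : β :=
  ∑ a, if a ∈ S then v a else 0

/-- The feasible set of (MPSC). -/
def Feas (g : Fin m → Vec n → ℝ) (h : Fin p → Vec n → ℝ)
    (G H : Fin l → Vec n → ℝ) : Set (Vec n) :=
  {x | (∀ i, g i x ≤ 0) ∧ (∀ j, h j x = 0) ∧ ∀ k, G k x * H k x = 0}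

/-- Index set of active inequality constraints. -/
def Ig (g : Fin m → Vec n → ℝ) (xb : Vec n) : Set (Fin m) := {i | g i xb = 0}

def IG (G H : Fin l → Vec n → ℝ) (xb : Vec n) : Set (Fin l) :=
  {k | G k xb = 0 ∧ H k xb ≠ 0}

def IH (G H : Fin l → Vec n → ℝ) (xb : Vec n) : Set (Fin l) :=
  {k | G k xb ≠ 0 ∧ H k xb = 0}

def IGH (G H : Fin l → Vec n → ℝ) (xb : Vec n) : Set (Fin l) :=
  {k | G k xb = 0 ∧ H k xb = 0}

/-- (β1, β2) is a disjoint bipartition of I_GH. -/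
def Partition (G H : Fin l → Vec n → ℝ) (xb : Vec n) (β1 β2 : Set (Fin l)) : Prop :=
  β1 ∩ β2 = ∅ ∧ β1 ∪ β2 = IGH G H xb

/-- Branch feasible set. -/
def BranchFeas (g : Fin m → Vec n → ℝ) (h : Fin p → Vec n → ℝ)
    (G H : Fin l → Vec n → ℝ) (xb : Vec n) (β1 β2 : Set (Fin l)) : Set (Vec n) :=
  {x | (∀ i, g i x ≤ 0) ∧ (∀ j, h j x = 0) ∧
    (∀ k ∈ IG G H xb ∪ β1, G k x = 0) ∧ ∀ k ∈ IH G H xb ∪ β2, H k x = 0}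

/-- Bouligand tangent cone, as defined in the paper. -/
def tangentCone (Ω : Set (Vec n)) (xb : Vec n) : Set (Vec n) :=
  {d | ∃ t : ℕ → ℝ, ∃ x : ℕ → Vec n, (∀ k, 0 ≤ t k) ∧ (∀ k, x k ∈ Ω) ∧
    Tendsto x atTop (nhds xb) ∧ Tendsto (fun k => t k • (x k - xb)) atTop (nhds d)}

/-- MPSC linearization cone. -/
def LCone (g : Fin m → Vec n → ℝ) (h : Fin p → Vec n → ℝ)
    (G H : Fin l → Vec n → ℝ) (xb : Vec n) : Set (Vec n) :=
  {d | (∀ i ∈ Ig g xb, fderiv ℝ (g i) xb d ≤ 0) ∧ (∀ j, fderiv ℝ (h j) xb d = 0) ∧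
    (∀ k ∈ IG G H xb, fderiv ℝ (G k) xb d = 0) ∧ (∀ k ∈ IH G H xb, fderiv ℝ (H k) xb d = 0) ∧
    ∀ k ∈ IGH G H xb, fderiv ℝ (G k) xb d * fderiv ℝ (H k) xb d = 0}

/-- Branch linearization cone. -/
def BranchLCone (g : Fin m → Vec n → ℝ) (h : Fin p → Vec n → ℝ)
    (G H : Fin l → Vec n → ℝ) (xb : Vec n) (β1 β2 : Set (Fin l)) : Set (Vec n) :=
  {d | (∀ i ∈ Ig g xb, fderiv ℝ (g i) xb d ≤ 0) ∧ (∀ j, fderiv ℝ (h j) xb d = 0) ∧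
    (∀ k ∈ IG G H xb ∪ β1, fderiv ℝ (G k) xb d = 0) ∧
    ∀ k ∈ IH G H xb ∪ β2, fderiv ℝ (H k) xb d = 0}

/-- MPSC critical subspace. -/
def CritSubspace (g : Fin m → Vec n → ℝ) (h : Fin p → Vec n → ℝ)
    (G H : Fin l → Vec n → ℝ) (xb : Vec n) : Set (Vec n) :=
  {d | (∀ i ∈ Ig g xb, fderiv ℝ (g i) xb d = 0) ∧ (∀ j, fderiv ℝ (h j) xb d = 0) ∧
    (∀ k ∈ IG G H xb ∪ IGH G H xb, fderiv ℝ (G k) xb d = 0) ∧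
    ∀ k ∈ IH G H xb ∪ IGH G H xb, fderiv ℝ (H k) xb d = 0}

/-- Rank (dimension of the span) of the family of gradients
{∇g_i(x)}_{i∈I1} ∪ {∇h_j(x)}_j ∪ {∇G_k(x)}_{k∈I3} ∪ {∇H_k(x)}_{k∈I4}. -/
def gradRank (g : Fin m → Vec n → ℝ) (h : Fin p → Vec n → ℝ)
    (G H : Fin l → Vec n → ℝ) (I1 : Set (Fin m)) (I3 I4 : Set (Fin l)) (x : Vec n) : ℕ :=
  Module.finrank ℝ ↥(Submodule.span ℝ
    ((fun i => gradient (g i) x) '' I1 ∪ Set.range (fun j => gradient (h j) x) ∪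
     (fun k => gradient (G k) x) '' I3 ∪ (fun k => gradient (H k) x) '' I4))

/-- MPSC-LICQ. -/
def LICQ (g : Fin m → Vec n → ℝ) (h : Fin p → Vec n → ℝ)
    (G H : Fin l → Vec n → ℝ) (xb : Vec n) : Prop :=
  ∀ (lam : Fin m → ℝ) (ρ : Fin p → ℝ) (μ ν : Fin l → ℝ),
    (∀ i, i ∉ Ig g xb → lam i = 0) →
    (∀ k, k ∉ IG G H xb ∪ IGH G H xb → μ k = 0) →
    (∀ k, k ∉ IH G H xb ∪ IGH G H xb → ν k = 0) →
    ∑ i, lam i • gradient (g i) xb + ∑ j, ρ j • gradient (h j) xb +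
      ∑ k, μ k • gradient (G k) xb + ∑ k, ν k • gradient (H k) xb = 0 →
    lam = 0 ∧ ρ = 0 ∧ μ = 0 ∧ ν = 0

/-- MPSC-RCRCQ. -/
def RCRCQ (g : Fin m → Vec n → ℝ) (h : Fin p → Vec n → ℝ)
    (G H : Fin l → Vec n → ℝ) (xb : Vec n) : Prop :=
  ∃ ε > (0:ℝ), ∀ I1 : Set (Fin m), I1 ⊆ Ig g xb →
    ∀ I3 I4 : Set (Fin l), I3 ⊆ IGH G H xb → I4 ⊆ IGH G H xb →
      ∀ x : Vec n, ‖x - xb‖ < ε →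
        gradRank g h G H I1 (I3 ∪ IG G H xb) (I4 ∪ IH G H xb) x =
        gradRank g h G H I1 (I3 ∪ IG G H xb) (I4 ∪ IH G H xb) xb

/-- MPSC-WCR. -/
def WCR (g : Fin m → Vec n → ℝ) (h : Fin p → Vec n → ℝ)
    (G H : Fin l → Vec n → ℝ) (xb : Vec n) : Prop :=
  ∃ ε > (0:ℝ), ∀ x : Vec n, ‖x - xb‖ < ε →
    gradRank g h G H (Ig g xb) (IG G H xb ∪ IGH G H xb) (IH G H xb ∪ IGH G H xb) x =
    gradRank g h G H (Ig g xb) (IG G H xb ∪ IGH G H xb) (IH G H xb ∪ IGH G H xb) xb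

/-- MPSC-PWCR. -/
def PWCR (g : Fin m → Vec n → ℝ) (h : Fin p → Vec n → ℝ)
    (G H : Fin l → Vec n → ℝ) (xb : Vec n) : Prop :=
  ∀ β1 β2 : Set (Fin l), Partition G H xb β1 β2 →
    ∃ ε > (0:ℝ), ∀ x : Vec n, ‖x - xb‖ < ε →
      gradRank g h G H (Ig g xb) (IG G H xb ∪ β1) (IH G H xb ∪ β2) x =
      gradRank g h G H (Ig g xb) (IG G H xb ∪ β1) (IH G H xb ∪ β2) xb

/-- The index set I_g^- associated with a branch (β1, β2). -/
def IgMinus (g : Fin m → Vec n → ℝ) (h : Fin p → Vec n → ℝ)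
    (G H : Fin l → Vec n → ℝ) (xb : Vec n) (β1 β2 : Set (Fin l)) : Set (Fin m) :=
  {i | i ∈ Ig g xb ∧ ∃ (lam : Fin m → ℝ) (ρ : Fin p → ℝ) (μ ν : Fin l → ℝ),
    (∀ i', 0 ≤ lam i') ∧ (∀ i', i' ∉ Ig g xb \ {i} → lam i' = 0) ∧
    (∀ k, k ∉ IG G H xb ∪ β1 → μ k = 0) ∧ (∀ k, k ∉ IH G H xb ∪ β2 → ν k = 0) ∧
    -gradient (g i) xb = ∑ i', lam i' • gradient (g i') xb + ∑ j, ρ j • gradient (h j) xb +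
      ∑ k, μ k • gradient (G k) xb + ∑ k, ν k • gradient (H k) xb}

/-- MPSC-PCRSC. -/
def PCRSC (g : Fin m → Vec n → ℝ) (h : Fin p → Vec n → ℝ)
    (G H : Fin l → Vec n → ℝ) (xb : Vec n) : Prop :=
  ∀ β1 β2 : Set (Fin l), Partition G H xb β1 β2 →
    ∃ ε > (0:ℝ), ∀ x : Vec n, ‖x - xb‖ < ε →
      gradRank g h G H (IgMinus g h G H xb β1 β2) (IG G H xb ∪ β1) (IH G H xb ∪ β2) x =
      gradRank g h G H (IgMinus g h G H xb β1 β2) (IG G H xb ∪ β1) (IH G H xb ∪ β2) xb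

/-- A twice differentiable arc on [0, δ) (one-sided at the endpoint 0),
with first derivative ξ'. -/
def TwiceDiffArc (δ : ℝ) (ξ ξ' : ℝ → Vec n) : Prop :=
  (∀ t ∈ Ico (0:ℝ) δ, HasDerivWithinAt ξ (ξ' t) (Ico (0:ℝ) δ) t) ∧
  ∀ t ∈ Ico (0:ℝ) δ, DifferentiableWithinAt ℝ ξ' (Ico (0:ℝ) δ) t

/-- MPSC-SSOCQ. -/
def SSOCQ (g : Fin m → Vec n → ℝ) (h : Fin p → Vec n → ℝ)
    (G H : Fin l → Vec n → ℝ) (xb : Vec n) : Prop :=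
  ∀ d ∈ LCone g h G H xb, d ≠ 0 →
    ∃ δ > (0:ℝ), ∃ J K : Set (Fin l), J ⊆ IGH G H xb ∧ K ⊆ IGH G H xb ∧
      ∃ ξ ξ' : ℝ → Vec n, TwiceDiffArc δ ξ ξ' ∧
        (∀ t ∈ Ico (0:ℝ) δ, ξ t ∈ Feas g h G H) ∧
        ξ 0 = xb ∧ ξ' 0 = d ∧
        (∀ t ∈ Ico (0:ℝ) δ, ∀ i ∈ Ig g xb, fderiv ℝ (g i) xb d = 0 → g i (ξ t) = 0) ∧
        (∀ t ∈ Ico (0:ℝ) δ, ∀ k ∈ IG G H xb ∪ J, G k (ξ t) = 0) ∧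
        ∀ t ∈ Ico (0:ℝ) δ, ∀ k ∈ IH G H xb ∪ K, H k (ξ t) = 0

/-- MPSC-WSOCQ. -/
def WSOCQ (g : Fin m → Vec n → ℝ) (h : Fin p → Vec n → ℝ)
    (G H : Fin l → Vec n → ℝ) (xb : Vec n) : Prop :=
  ∀ d ∈ CritSubspace g h G H xb, d ≠ 0 →
    ∃ δ > (0:ℝ), ∃ J K : Set (Fin l), J ⊆ IGH G H xb ∧ K ⊆ IGH G H xb ∧
      ∃ ζ ζ' : ℝ → Vec n, TwiceDiffArc δ ζ ζ' ∧
        (∀ t ∈ Ico (0:ℝ) δ, ζ t ∈ Feas g h G H) ∧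
        ζ 0 = xb ∧ ζ' 0 = d ∧
        (∀ t ∈ Ico (0:ℝ) δ, ∀ i ∈ Ig g xb, g i (ζ t) = 0) ∧
        (∀ t ∈ Ico (0:ℝ) δ, ∀ k ∈ IG G H xb ∪ J, G k (ζ t) = 0) ∧
        ∀ t ∈ Ico (0:ℝ) δ, ∀ k ∈ IH G H xb ∪ K, H k (ζ t) = 0

/-- The S-stationarity system for multipliers (λ, ρ, μ, ν) at xb. -/
def SStationarySystem (f : Vec n → ℝ) (g : Fin m → Vec n → ℝ) (h : Fin p → Vec n → ℝ)
    (G H : Fin l → Vec n → ℝ) (xb : Vec n)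
    (lam : Fin m → ℝ) (ρ : Fin p → ℝ) (μ ν : Fin l → ℝ) : Prop :=
  (∀ i, 0 ≤ lam i) ∧ (∀ i, lam i * g i xb = 0) ∧
  (∀ k ∈ IH G H xb ∪ IGH G H xb, μ k = 0) ∧
  (∀ k ∈ IG G H xb ∪ IGH G H xb, ν k = 0) ∧
  gradient f xb + ∑ i, lam i • gradient (g i) xb + ∑ j, ρ j • gradient (h j) xb +
    ∑ k, μ k • gradient (G k) xb + ∑ k, ν k • gradient (H k) xb = 0

def SStationary (f : Vec n → ℝ) (g : Fin m → Vec n → ℝ) (h : Fin p → Vec n → ℝ)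
    (G H : Fin l → Vec n → ℝ) (xb : Vec n) : Prop :=
  ∃ (lam : Fin m → ℝ) (ρ : Fin p → ℝ) (μ ν : Fin l → ℝ),
    SStationarySystem f g h G H xb lam ρ μ ν

/-- The M-stationarity system for multipliers (λ, ρ, μ, ν) at xb. -/
def MStationarySystem (f : Vec n → ℝ) (g : Fin m → Vec n → ℝ) (h : Fin p → Vec n → ℝ)
    (G H : Fin l → Vec n → ℝ) (xb : Vec n)
    (lam : Fin m → ℝ) (ρ : Fin p → ℝ) (μ ν : Fin l → ℝ) : Prop :=
  (∀ i, 0 ≤ lam i) ∧ (∀ i, lam i * g i xb = 0) ∧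
  (∀ k ∈ IH G H xb, μ k = 0) ∧ (∀ k ∈ IG G H xb, ν k = 0) ∧
  (∀ k ∈ IGH G H xb, μ k * ν k = 0) ∧
  gradient f xb + ∑ i, lam i • gradient (g i) xb + ∑ j, ρ j • gradient (h j) xb +
    ∑ k, μ k • gradient (G k) xb + ∑ k, ν k • gradient (H k) xb = 0

def MStationary (f : Vec n → ℝ) (g : Fin m → Vec n → ℝ) (h : Fin p → Vec n → ℝ)
    (G H : Fin l → Vec n → ℝ) (xb : Vec n) : Prop :=
  ∃ (lam : Fin m → ℝ) (ρ : Fin p → ℝ) (μ ν : Fin l → ℝ),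
    MStationarySystem f g h G H xb lam ρ μ ν

/-- Local optimality for (MPSC). -/
def LocallyOptimal (f : Vec n → ℝ) (g : Fin m → Vec n → ℝ) (h : Fin p → Vec n → ℝ)
    (G H : Fin l → Vec n → ℝ) (xb : Vec n) : Prop :=
  xb ∈ Feas g h G H ∧ ∃ ε > (0:ℝ), ∀ x ∈ Feas g h G H, ‖x - xb‖ < ε → f xb ≤ f x

/-- Hessian quadratic form dᵀ∇²φ(x)d. -/
def hessForm (φ : Vec n → ℝ) (x d : Vec n) : ℝ :=
  iteratedFDeriv ℝ 2 φ x ![d, d]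

/-- The Lagrange function ℓ. -/
def lagr (f : Vec n → ℝ) (g : Fin m → Vec n → ℝ) (h : Fin p → Vec n → ℝ)
    (G H : Fin l → Vec n → ℝ)
    (lam : Fin m → ℝ) (ρ : Fin p → ℝ) (μ ν : Fin l → ℝ) : Vec n → ℝ :=
  fun x => f x + ∑ i, lam i * g i x + ∑ j, ρ j * h j x +
    ∑ k, μ k * G k x + ∑ k, ν k * H k x

/-- Constraint-violation residual. -/
def residual (g : Fin m → Vec n → ℝ) (h : Fin p → Vec n → ℝ)
    (G H : Fin l → Vec n → ℝ) (x : Vec n) : ℝ :=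
  Real.sqrt (∑ i, max (g i x) 0 ^ 2 + ∑ j, h j x ^ 2 + ∑ k, min (G k x ^ 2) (H k x ^ 2))

/-- Penalty function P_κ. -/
def Pen (f : Vec n → ℝ) (g : Fin m → Vec n → ℝ) (h : Fin p → Vec n → ℝ)
    (G H : Fin l → Vec n → ℝ) (κ : ℝ) (x : Vec n) : ℝ :=
  f x + κ * residual g h G H x

/-- MPSC piecewise second-order quasi-normality. -/
def PSOQN (g : Fin m → Vec n → ℝ) (h : Fin p → Vec n → ℝ)
    (G H : Fin l → Vec n → ℝ) (xb : Vec n) : Prop :=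
  ∀ β1 β2 : Set (Fin l), Partition G H xb β1 β2 →
    ¬ ∃ (lam : Fin m → ℝ) (ρ : Fin p → ℝ) (μ ν : Fin l → ℝ),
      (∀ i, 0 ≤ lam i) ∧
      (∀ k, k ∉ IG G H xb ∪ β1 → μ k = 0) ∧ (∀ k, k ∉ IH G H xb ∪ β2 → ν k = 0) ∧
      ¬(lam = 0 ∧ ρ = 0 ∧ μ = 0 ∧ ν = 0) ∧
      (∑ i, lam i • gradient (g i) xb + ∑ j, ρ j • gradient (h j) xb +
        ∑ k, μ k • gradient (G k) xb + ∑ k, ν k • gradient (H k) xb = 0) ∧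
      (∀ d : Vec n, (∀ i ∈ Ig g xb, fderiv ℝ (g i) xb d = 0) →
        (∀ j, fderiv ℝ (h j) xb d = 0) →
        (∀ k ∈ IG G H xb ∪ β1, fderiv ℝ (G k) xb d = 0) →
        (∀ k ∈ IH G H xb ∪ β2, fderiv ℝ (H k) xb d = 0) →
        0 ≤ ∑ i, lam i * hessForm (g i) xb d + ∑ j, ρ j * hessForm (h j) xb d +
          ∑ k, μ k * hessForm (G k) xb d + ∑ k, ν k * hessForm (H k) xb d) ∧
      ∃ xs : ℕ → Vec n, Tendsto xs atTop (nhds xb) ∧ ∀ s,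
        (∀ i, 0 < lam i → 0 < lam i * g i (xs s)) ∧
        (∀ j, ρ j ≠ 0 → 0 < ρ j * h j (xs s)) ∧
        (∀ k, μ k ≠ 0 → 0 < μ k * G k (xs s)) ∧
        (∀ k, ν k ≠ 0 → 0 < ν k * H k (xs s))

/-!
Along the arc `ξ` that MPSC-SSOCQ provides for a critical direction `d`, every multiplier term of
the Lagrangian `ℓ` vanishes: S-stationarity puts the support of `μ` and `ν` inside `I_G` and
`I_H`, and criticality of `d` forces `λᵢ ∇gᵢ(x̄)ᵀd = 0`, so each active `gᵢ` with `λᵢ > 0` stays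
zero on the arc. Hence `ℓ ∘ ξ = f ∘ ξ` has a one-sided local minimum at `0`. As `∇ℓ(x̄) = 0`,
the first derivative of `ℓ ∘ ξ` vanishes at `0` and its second derivative there is
`dᵀ∇²ℓ(x̄)d`, which must therefore be nonnegative.
-/

theorem eventually_neg_of_hasDerivWithinAt_Ico {ψ : ℝ → ℝ} {δ A : ℝ} (hδ : 0 < δ)
    (hψ0 : ψ 0 = 0) (hψ : HasDerivWithinAt ψ A (Ico 0 δ) 0) (hA : A < 0) :
    ∀ᶠ t in 𝓝[>] 0, ψ t < 0 := by
  have hslope : Tendsto (slope ψ 0) (𝓝[>] 0) (𝓝 A) := by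
    rw [← nhdsWithin_Ioo_eq_nhdsGT hδ, ← hasDerivWithinAt_iff_tendsto_slope' (by simp)]
    exact hψ.mono Ioo_subset_Ico_self
  filter_upwards [hslope (Iio_mem_nhds hA), self_mem_nhdsWithin] with t hneg (ht : 0 < t)
  simpa [slope_def_field, hψ0, div_neg_iff, ht, ht.not_gt] using hneg

theorem nonneg_of_hasDerivWithinAt_Ico_of_isLocalMinOn {φ ψ : ℝ → ℝ} {δ A : ℝ}
    (hδ : 0 < δ)
    (hφ : ∀ t ∈ Ico 0 δ, HasDerivWithinAt φ (ψ t) (Ico 0 δ) t) (hψ0 : ψ 0 = 0)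
    (hψ : HasDerivWithinAt ψ A (Ico 0 δ) 0) (hmin : IsLocalMinOn φ (Ici 0) 0) : 0 ≤ A := by
  by_contra! hA
  have hlt : ∀ᶠ t in 𝓝[>] 0, t < δ := nhdsWithin_le_nhds (Iio_mem_nhds hδ)
  have hev : ∀ᶠ t in 𝓝[>] 0, t < δ ∧ ψ t < 0 ∧ φ 0 ≤ φ t :=
    hlt.and <| (eventually_neg_of_hasDerivWithinAt_Ico hδ hψ0 hψ hA).and <|
      nhdsWithin_mono 0 Ioi_subset_Ici_self hmin
  obtain ⟨c, hc0 : 0 < c, hc⟩ := mem_nhdsGT_iff_exists_Ioo_subset.mp hev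
  obtain ⟨t, ht⟩ : (Ioo 0 c).Nonempty := nonempty_Ioo.2 hc0
  have hIcc : Icc 0 t ⊆ Ico 0 δ := fun x hx => ⟨hx.1, hx.2.trans_lt (hc ht).1⟩
  have hanti : StrictAntiOn φ (Icc 0 t) := by
    refine strictAntiOn_of_hasDerivWithinAt_neg (f' := ψ) (convex_Icc 0 t)
      (fun x hx => (hφ x (hIcc hx)).continuousWithinAt.mono hIcc) (fun x hx => ?_)
      (fun x hx => ?_)
    · rw [interior_Icc] at hx ⊢
      exact (hφ x (hIcc (Ioo_subset_Icc_self hx))).mono (Ioo_subset_Icc_self.trans hIcc)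
    · rw [interior_Icc] at hx
      exact (hc ⟨hx.1, hx.2.trans ht.2⟩).2.1
  exact (hanti (left_mem_Icc.2 ht.1.le) (right_mem_Icc.2 ht.1.le) ht.1).not_ge (hc ht).2.2

section Arc

variable {E : Type*} [NormedAddCommGroup E] [NormedSpace ℝ E] {φ : E → ℝ}

theorem hasDerivWithinAt_fderiv_apply_of_fderiv_eq_zero (hφ : ContDiff ℝ 2 φ)
    {ξ ξ' : ℝ → E} {s : Set ℝ} {t : ℝ} (hξ : HasDerivWithinAt ξ (ξ' t) s t)
    (hξ' : DifferentiableWithinAt ℝ ξ' s t) (hcrit : fderiv ℝ φ (ξ t) = 0) :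
    HasDerivWithinAt (fun u => fderiv ℝ φ (ξ u) (ξ' u))
      (iteratedFDeriv ℝ 2 φ (ξ t) ![ξ' t, ξ' t]) s t := by
  have hφ' : HasFDerivAt (fderiv ℝ φ) (fderiv ℝ (fderiv ℝ φ) (ξ t)) (ξ t) :=
    ((hφ.fderiv_right (by norm_num)).differentiable one_ne_zero _).hasFDerivAt
  simpa [iteratedFDeriv_two_apply, hcrit] using
    (hφ'.comp_hasDerivWithinAt t hξ).clm_apply hξ'.hasDerivWithinAt

theorem iteratedFDeriv_two_nonneg_of_isLocalMinOn_comp (hφ : ContDiff ℝ 2 φ) {δ : ℝ}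
    (hδ : 0 < δ) {ξ ξ' : ℝ → E} (hξ : ∀ t ∈ Ico 0 δ, HasDerivWithinAt ξ (ξ' t) (Ico 0 δ) t)
    (hξ' : DifferentiableWithinAt ℝ ξ' (Ico 0 δ) 0) (hcrit : fderiv ℝ φ (ξ 0) = 0)
    (hmin : IsLocalMinOn (φ ∘ ξ) (Ici 0) 0) :
    0 ≤ iteratedFDeriv ℝ 2 φ (ξ 0) ![ξ' 0, ξ' 0] :=
  nonneg_of_hasDerivWithinAt_Ico_of_isLocalMinOn hδ
    (fun t ht => (hφ.differentiable two_ne_zero _).hasFDerivAt.comp_hasDerivWithinAt t (hξ t ht))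
    (by simp [hcrit])
    (hasDerivWithinAt_fderiv_apply_of_fderiv_eq_zero hφ (hξ 0 ⟨le_rfl, hδ⟩) hξ' hcrit) hmin

end Arc

section Lagrangian

variable {f : Vec n → ℝ} {g : Fin m → Vec n → ℝ} {h : Fin p → Vec n → ℝ}
  {G H : Fin l → Vec n → ℝ} {lam : Fin m → ℝ} {ρ : Fin p → ℝ} {μ ν : Fin l → ℝ}

def lagrFDeriv (f : Vec n → ℝ) (g : Fin m → Vec n → ℝ) (h : Fin p → Vec n → ℝ)
    (G H : Fin l → Vec n → ℝ) (lam : Fin m → ℝ) (ρ : Fin p → ℝ) (μ ν : Fin l → ℝ)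
    (x : Vec n) : Vec n →L[ℝ] ℝ :=
  fderiv ℝ f x + ∑ i, lam i • fderiv ℝ (g i) x + ∑ j, ρ j • fderiv ℝ (h j) x +
    ∑ k, μ k • fderiv ℝ (G k) x + ∑ k, ν k • fderiv ℝ (H k) x

theorem contDiff_lagr {r : WithTop ℕ∞} (hf : ContDiff ℝ r f) (hg : ∀ i, ContDiff ℝ r (g i))
    (hh : ∀ j, ContDiff ℝ r (h j)) (hG : ∀ k, ContDiff ℝ r (G k))
    (hH : ∀ k, ContDiff ℝ r (H k)) : ContDiff ℝ r (lagr f g h G H lam ρ μ ν) := by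
  unfold lagr
  fun_prop

theorem hasFDerivAt_lagr {x : Vec n} (hf : DifferentiableAt ℝ f x)
    (hg : ∀ i, DifferentiableAt ℝ (g i) x) (hh : ∀ j, DifferentiableAt ℝ (h j) x)
    (hG : ∀ k, DifferentiableAt ℝ (G k) x) (hH : ∀ k, DifferentiableAt ℝ (H k) x) :
    HasFDerivAt (lagr f g h G H lam ρ μ ν) (lagrFDeriv f g h G H lam ρ μ ν x) x := by
  unfold lagr lagrFDeriv
  exact (((hf.hasFDerivAt.add
    (HasFDerivAt.fun_sum fun i _ => (hg i).hasFDerivAt.const_mul _)).add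
    (HasFDerivAt.fun_sum fun j _ => (hh j).hasFDerivAt.const_mul _)).add
    (HasFDerivAt.fun_sum fun k _ => (hG k).hasFDerivAt.const_mul _)).add
    (HasFDerivAt.fun_sum fun k _ => (hH k).hasFDerivAt.const_mul _)

theorem lagrFDeriv_eq_zero {x : Vec n}
    (hgrad : gradient f x + ∑ i, lam i • gradient (g i) x + ∑ j, ρ j • gradient (h j) x +
      ∑ k, μ k • gradient (G k) x + ∑ k, ν k • gradient (H k) x = 0) :
    lagrFDeriv f g h G H lam ρ μ ν x = 0 := by
  simpa [lagrFDeriv, gradient, map_sum] using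
    congrArg (InnerProductSpace.toDual ℝ (Vec n)) hgrad

theorem lagrFDeriv_apply (x d : Vec n) :
    lagrFDeriv f g h G H lam ρ μ ν x d = fderiv ℝ f x d + ∑ i, lam i * fderiv ℝ (g i) x d +
      ∑ j, ρ j * fderiv ℝ (h j) x d + ∑ k, μ k * fderiv ℝ (G k) x d +
      ∑ k, ν k * fderiv ℝ (H k) x d := by
  simp [lagrFDeriv]

theorem mem_IG_of_mul_eq_zero {xb : Vec n} {k : Fin l} (hGH : G k xb * H k xb = 0)
    (hk : k ∉ IH G H xb ∪ IGH G H xb) : k ∈ IG G H xb := by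
  simp only [IG, IH, IGH, mem_union, mem_ofPred_eq] at hk ⊢
  rcases mul_eq_zero.mp hGH with hG | hH <;> tauto

theorem mem_IH_of_mul_eq_zero {xb : Vec n} {k : Fin l} (hGH : G k xb * H k xb = 0)
    (hk : k ∉ IG G H xb ∪ IGH G H xb) : k ∈ IH G H xb := by
  simp only [IG, IH, IGH, mem_union, mem_ofPred_eq] at hk ⊢
  rcases mul_eq_zero.mp hGH with hG | hH <;> tauto

variable {xb : Vec n}

theorem SStationarySystem.mu_mul_eq_zero (hS : SStationarySystem f g h G H xb lam ρ μ ν)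
    (hxb : xb ∈ Feas g h G H) {a : Fin l → ℝ} (ha : ∀ k ∈ IG G H xb, a k = 0)
    (k : Fin l) : μ k * a k = 0 := by
  by_cases hk : k ∈ IH G H xb ∪ IGH G H xb
  · rw [hS.2.2.1 k hk, zero_mul]
  · rw [ha k (mem_IG_of_mul_eq_zero (hxb.2.2 k) hk), mul_zero]

theorem SStationarySystem.nu_mul_eq_zero (hS : SStationarySystem f g h G H xb lam ρ μ ν)
    (hxb : xb ∈ Feas g h G H) {a : Fin l → ℝ} (ha : ∀ k ∈ IH G H xb, a k = 0)
    (k : Fin l) : ν k * a k = 0 := by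
  by_cases hk : k ∈ IG G H xb ∪ IGH G H xb
  · rw [hS.2.2.2.1 k hk, zero_mul]
  · rw [ha k (mem_IH_of_mul_eq_zero (hxb.2.2 k) hk), mul_zero]

theorem SStationarySystem.lam_mul_fderiv_eq_zero (hS : SStationarySystem f g h G H xb lam ρ μ ν)
    (hxb : xb ∈ Feas g h G H) {d : Vec n} (hd : d ∈ LCone g h G H xb)
    (hfd : fderiv ℝ f xb d ≤ 0) (i : Fin m) : lam i * fderiv ℝ (g i) xb d = 0 := by
  obtain ⟨hdg, hdh, hdG, hdH, -⟩ := hd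
  have hnonpos : ∀ i, lam i * fderiv ℝ (g i) xb d ≤ 0 := fun i => by
    by_cases hi : g i xb = 0
    · exact mul_nonpos_of_nonneg_of_nonpos (hS.1 i) (hdg i hi)
    · rw [(mul_eq_zero.mp (hS.2.1 i)).resolve_right hi, zero_mul]
  have hh0 : ∑ j, ρ j * fderiv ℝ (h j) xb d = 0 :=
    Finset.sum_eq_zero fun j _ => by rw [hdh j, mul_zero]
  have hG0 : ∑ k, μ k * fderiv ℝ (G k) xb d = 0 :=
    Finset.sum_eq_zero fun k _ => hS.mu_mul_eq_zero hxb hdG k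
  have hH0 : ∑ k, ν k * fderiv ℝ (H k) xb d = 0 :=
    Finset.sum_eq_zero fun k _ => hS.nu_mul_eq_zero hxb hdH k
  have hsum := lagrFDeriv_apply (f := f) (g := g) (h := h) (G := G) (H := H) (lam := lam)
    (ρ := ρ) (μ := μ) (ν := ν) xb d
  rw [lagrFDeriv_eq_zero hS.2.2.2.2, zero_apply, hh0, hG0, hH0] at hsum
  have hzero : ∑ i, lam i * fderiv ℝ (g i) xb d = 0 :=
    le_antisymm (Finset.sum_nonpos fun i _ => hnonpos i) (by linarith)
  exact (Finset.sum_eq_zero_iff_of_nonpos fun i _ => hnonpos i).mp hzero i (Finset.mem_univ i)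

theorem lagr_eq_of_mul_eq_zero {x : Vec n} (hg : ∀ i, lam i * g i x = 0) (hh : ∀ j, h j x = 0)
    (hG : ∀ k, μ k * G k x = 0) (hH : ∀ k, ν k * H k x = 0) :
    lagr f g h G H lam ρ μ ν x = f x := by
  simp [lagr, hg, hh, hG, hH]

theorem SStationarySystem.lagr_eq (hS : SStationarySystem f g h G H xb lam ρ μ ν)
    (hxb : xb ∈ Feas g h G H) {d x : Vec n} (hd : ∀ i, lam i * fderiv ℝ (g i) xb d = 0)
    (hgx : ∀ i ∈ Ig g xb, fderiv ℝ (g i) xb d = 0 → g i x = 0) (hhx : ∀ j, h j x = 0)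
    (hGx : ∀ k ∈ IG G H xb, G k x = 0) (hHx : ∀ k ∈ IH G H xb, H k x = 0) :
    lagr f g h G H lam ρ μ ν x = f x := by
  refine lagr_eq_of_mul_eq_zero (fun i => ?_) hhx (hS.mu_mul_eq_zero hxb hGx)
    (hS.nu_mul_eq_zero hxb hHx)
  rcases eq_or_ne (lam i) 0 with hi | hi
  · rw [hi, zero_mul]
  · rw [hgx i ((mul_eq_zero.mp (hS.2.1 i)).resolve_left hi)
      ((mul_eq_zero.mp (hd i)).resolve_left hi), mul_zero]

end Lagrangian

theorem ssonc_under_ssocq_general {n m p l : ℕ} (f : Vec n → ℝ) (g : Fin m → Vec n → ℝ)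
    (h : Fin p → Vec n → ℝ) (G H : Fin l → Vec n → ℝ)
    (hf : ContDiff ℝ 2 f) (hg : ∀ i, ContDiff ℝ 2 (g i)) (hh : ∀ j, ContDiff ℝ 2 (h j))
    (hG : ∀ k, ContDiff ℝ 2 (G k)) (hH : ∀ k, ContDiff ℝ 2 (H k))
    (xb : Vec n)
    (hopt : LocallyOptimal f g h G H xb)
    (hcq : SSOCQ g h G H xb) :
    ∀ (lam : Fin m → ℝ) (ρ : Fin p → ℝ) (μ ν : Fin l → ℝ),
      SStationarySystem f g h G H xb lam ρ μ ν →
      ∀ d ∈ LCone g h G H xb, fderiv ℝ f xb d ≤ 0 →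
        0 ≤ hessForm (lagr f g h G H lam ρ μ ν) xb d := by
  intro lam ρ μ ν hS d hd hfd
  obtain ⟨hxb, ε, hε, hloc⟩ := hopt
  set ℓ := lagr f g h G H lam ρ μ ν
  have hℓ : ContDiff ℝ 2 ℓ := contDiff_lagr hf hg hh hG hH
  have hDℓ : fderiv ℝ ℓ xb = 0 := by
    have h2 : (2 : WithTop ℕ∞) ≠ 0 := two_ne_zero
    rw [(hasFDerivAt_lagr (hf.differentiable h2 xb) (fun i => (hg i).differentiable h2 xb)
      (fun j => (hh j).differentiable h2 xb) (fun k => (hG k).differentiable h2 xb)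
      (fun k => (hH k).differentiable h2 xb)).fderiv, lagrFDeriv_eq_zero hS.2.2.2.2]
  rcases eq_or_ne d 0 with rfl | hd0
  · exact ((iteratedFDeriv ℝ 2 ℓ xb).map_coord_zero 0 rfl).ge
  obtain ⟨δ, hδ, J, K, -, -, ξ, ξ', ⟨hξ, hξ'⟩, hfeas, hξ0, hξ'0, hgξ, hGξ, hHξ⟩ :=
    hcq d hd hd0
  have hℓξ : ∀ t ∈ Ico 0 δ, ℓ (ξ t) = f (ξ t) := fun t ht =>
    hS.lagr_eq hxb (hS.lam_mul_fderiv_eq_zero hxb hd hfd) (hgξ t ht) (hfeas t ht).2.1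
      (fun k hk => hGξ t ht k (Or.inl hk)) (fun k hk => hHξ t ht k (Or.inl hk))
  have hmin : IsLocalMinOn (ℓ ∘ ξ) (Ici 0) 0 := by
    have hξxb : Tendsto ξ (𝓝[≥] 0) (𝓝 xb) := by
      rw [← nhdsWithin_Ico_eq_nhdsGE hδ, ← hξ0]
      exact (hξ 0 ⟨le_rfl, hδ⟩).continuousWithinAt
    filter_upwards [hξxb (ball_mem_nhds xb hε), Ico_mem_nhdsGE hδ] with t hball ht
    rw [Function.comp_apply, Function.comp_apply, hℓξ 0 ⟨le_rfl, hδ⟩, hℓξ t ht, hξ0]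
    exact hloc _ (hfeas t ht) (mem_ball_iff_norm.mp hball)
  unfold hessForm
  simpa only [hξ0, hξ'0] using
    iteratedFDeriv_two_nonneg_of_isLocalMinOn_comp hℓ hδ hξ (hξ' 0 ⟨le_rfl, hδ⟩)
      (hξ0 ▸ hDℓ) hmin

theorem ssonc_under_ssocq {n m p l : ℕ} (f : Vec n → ℝ) (g : Fin m → Vec n → ℝ)
    (h : Fin p → Vec n → ℝ) (G H : Fin l → Vec n → ℝ)
    (hf : ContDiff ℝ 2 f) (hg : ∀ i, ContDiff ℝ 2 (g i)) (hh : ∀ j, ContDiff ℝ 2 (h j))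
    (hG : ∀ k, ContDiff ℝ 2 (G k)) (hH : ∀ k, ContDiff ℝ 2 (H k))
    (xb : Vec n) (hxb : xb ∈ Feas g h G H)
    (hopt : LocallyOptimal f g h G H xb) (hS : SStationary f g h G H xb)
    (hcq : SSOCQ g h G H xb) :
    ∀ (lam : Fin m → ℝ) (ρ : Fin p → ℝ) (μ ν : Fin l → ℝ),
      SStationarySystem f g h G H xb lam ρ μ ν →
      ∀ d ∈ LCone g h G H xb, fderiv ℝ f xb d ≤ 0 →
        0 ≤ hessForm (lagr f g h G H lam ρ μ ν) xb d :=
  ssonc_under_ssocq_general f g h G H hf hg hh hG hH xb hopt hcq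

end MPSC
end
end

section
/- Let x̄ ∈ F be a locally optimal solution of (MPSC). Assume that the local error bound of (MPSC) holds at x̄ with constant α > 0, and that f is Lipschitz continuous with constant L_f on some neighbourhood of x̄. Then for every κ > α·L_f, x̄ is a local minimizer of the penalty function P_κ; that is, there exists ε' > 0 such that P_κ(x̄) ≤ P_κ(x) for all x with ‖x − x̄‖ < ε'. -/
open Set Filter Topology Metric

noncomputable section

namespace MPSC

variable {n m p l : ℕ}

theorem error_bound_implies_exact_penalty {n m p l : ℕ} (f : Vec n → ℝ) (g : Fin m → Vec n → ℝ)
    (h : Fin p → Vec n → ℝ) (G H : Fin l → Vec n → ℝ)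
    (hf : ContDiff ℝ 2 f) (hg : ∀ i, ContDiff ℝ 2 (g i)) (hh : ∀ j, ContDiff ℝ 2 (h j))
    (hG : ∀ k, ContDiff ℝ 2 (G k)) (hH : ∀ k, ContDiff ℝ 2 (H k))
    (xb : Vec n) (hxb : xb ∈ Feas g h G H)
    (hopt : LocallyOptimal f g h G H xb) (α Lf : ℝ) (hα : 0 < α)
    (heb : ∃ ε > (0:ℝ), ∀ x : Vec n, ‖x - xb‖ < ε →
      Metric.infDist x (Feas g h G H) ≤ α * residual g h G H x)
    (hlip : ∃ ε > (0:ℝ), ∀ x : Vec n, ‖x - xb‖ < ε → ∀ y : Vec n, ‖y - xb‖ < ε →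
      |f x - f y| ≤ Lf * ‖x - y‖) :
    ∀ κ : ℝ, α * Lf < κ →
      ∃ ε' > (0:ℝ), ∀ x : Vec n, ‖x - xb‖ < ε' →
        Pen f g h G H κ xb ≤ Pen f g h G H κ x := by
  classical
  obtain ⟨ε1, hε1, hopt'⟩ := hopt.2
  obtain ⟨ε2, hε2, heb'⟩ := heb
  obtain ⟨ε3, hε3, hlip'⟩ := hlip
  intro κ hκ
  have hrnn : ∀ x, 0 ≤ residual g h G H x := fun x => Real.sqrt_nonneg _
  obtain ⟨hg0, hh0, hGH0⟩ := hxb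
  have hrxb : residual g h G H xb = 0 := by
    unfold residual
    rw [Real.sqrt_eq_zero']
    have e1 : ∑ i, max (g i xb) 0 ^ 2 = 0 := by
      apply Finset.sum_eq_zero
      intro i _
      rw [max_eq_right (hg0 i)]; ring
    have e2 : ∑ j, h j xb ^ 2 = 0 := by
      apply Finset.sum_eq_zero
      intro j _
      rw [hh0 j]; ring
    have e3 : ∑ k, min (G k xb ^ 2) (H k xb ^ 2) = 0 := by
      apply Finset.sum_eq_zero
      intro k _
      rcases mul_eq_zero.mp (hGH0 k) with hk | hk
      · rw [hk]
        simp [min_eq_left (sq_nonneg _)]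
      · rw [hk]
        simp [min_eq_right (sq_nonneg _)]
    rw [e1, e2, e3]; norm_num
  have hrc : Continuous (residual g h G H) := by
    unfold residual
    apply Real.continuous_sqrt.comp
    apply Continuous.add
    apply Continuous.add
    · exact continuous_finset_sum _ fun i _ =>
        (((hg i).continuous.max continuous_const).pow 2)
    · exact continuous_finset_sum _ fun j _ => ((hh j).continuous.pow 2)
    · exact continuous_finset_sum _ fun k _ =>
        (((hG k).continuous.pow 2).min ((hH k).continuous.pow 2))
  have hclosed : IsClosed (Feas g h G H) := by
    have hset : Feas g h G H = (⋂ i, {x : Vec n | g i x ≤ 0}) ∩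
        ((⋂ j, {x : Vec n | h j x = 0}) ∩ (⋂ k, {x : Vec n | G k x * H k x = 0})) := by
      ext x
      simp only [Feas, Set.mem_setOf_eq, Set.mem_inter_iff, Set.mem_iInter]
    rw [hset]
    exact (isClosed_iInter fun i => isClosed_le (hg i).continuous continuous_const).inter
      ((isClosed_iInter fun j => isClosed_eq (hh j).continuous continuous_const).inter
      (isClosed_iInter fun k => isClosed_eq ((hG k).continuous.mul (hH k).continuous)
        continuous_const))
  have hfeasne : (Feas g h G H).Nonempty := ⟨xb, hg0, hh0, hGH0⟩
  by_cases htriv : ∀ x : Vec n, x = xb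
  · refine ⟨1, one_pos, fun x _ => ?_⟩
    rw [htriv x]
  -- nontrivial case : Lf ≥ 0
  push_neg at htriv
  obtain ⟨x0, hx0⟩ := htriv
  have hLf : 0 ≤ Lf := by
    set v := x0 - xb with hv
    have hvne : v ≠ 0 := sub_ne_zero.mpr hx0
    have hvnorm : 0 < ‖v‖ := norm_pos_iff.mpr hvne
    set u : Vec n := xb + (ε3 / (2 * ‖v‖)) • v with hu
    have hn2 : ‖(ε3 / (2 * ‖v‖)) • v‖ = ε3 / 2 := by
      rw [norm_smul, Real.norm_eq_abs,
        abs_of_pos (by positivity : (0:ℝ) < ε3 / (2 * ‖v‖))]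
      field_simp
    have hun : ‖u - xb‖ = ε3 / 2 := by
      rw [hu, add_sub_cancel_left, hn2]
    have h1 : ‖u - xb‖ < ε3 := by rw [hun]; linarith
    have h2 : ‖xb - xb‖ < ε3 := by simpa using hε3
    have := hlip' u h1 xb h2
    rw [add_sub_cancel_left (a := xb), hn2] at this
    have habs : (0:ℝ) ≤ |f u - f xb| := abs_nonneg _
    nlinarith
  -- continuity : get δ with α * residual < c on ball
  set c : ℝ := min ε1 ε3 / 2 with hc
  have hcpos : 0 < c := by
    apply div_pos _ two_pos
    exact lt_min hε1 hε3
  have hopen : IsOpen {x : Vec n | α * residual g h G H x < c} :=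
    isOpen_lt (continuous_const.mul hrc) continuous_const
  have hmem : xb ∈ {x : Vec n | α * residual g h G H x < c} := by
    simp [Set.mem_setOf_eq, hrxb, hcpos]
  obtain ⟨δ, hδ, hball⟩ := Metric.isOpen_iff.mp hopen xb hmem
  refine ⟨min (min ε2 δ) c, by positivity, fun x hx => ?_⟩
  have hxε2 : ‖x - xb‖ < ε2 := lt_of_lt_of_le hx (le_trans (min_le_left _ _) (min_le_left _ _))
  have hxδ : ‖x - xb‖ < δ := lt_of_lt_of_le hx (le_trans (min_le_left _ _) (min_le_right _ _))
  have hxc : ‖x - xb‖ < c := lt_of_lt_of_le hx (min_le_right _ _)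
  have hxball : x ∈ Metric.ball xb δ := by
    rw [Metric.mem_ball, dist_eq_norm]; exact hxδ
  have hres : α * residual g h G H x < c := hball hxball
  have hinf : Metric.infDist x (Feas g h G H) ≤ α * residual g h G H x := heb' x hxε2
  obtain ⟨y, hyF, hyd⟩ := hclosed.exists_infDist_eq_dist hfeasne x
  have hxy : ‖x - y‖ ≤ α * residual g h G H x := by
    rw [← dist_eq_norm, ← hyd]; exact hinf
  have hxyc : ‖x - y‖ < c := lt_of_le_of_lt hxy hres
  have hyxb : ‖y - xb‖ < min ε1 ε3 := by
    calc ‖y - xb‖ ≤ ‖y - x‖ + ‖x - xb‖ := norm_sub_le_norm_sub_add_norm_sub _ _ _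
    _ < c + c := by rw [norm_sub_rev]; exact add_lt_add hxyc hxc
    _ = min ε1 ε3 := by rw [hc]; ring
  have hyε1 : ‖y - xb‖ < ε1 := lt_of_lt_of_le hyxb (min_le_left _ _)
  have hyε3 : ‖y - xb‖ < ε3 := lt_of_lt_of_le hyxb (min_le_right _ _)
  have hxε3 : ‖x - xb‖ < ε3 := lt_of_lt_of_le hxc (le_trans
    (by rw [hc]; linarith [lt_min hε1 hε3] : c ≤ min ε1 ε3) (min_le_right _ _))
  have hfopt : f xb ≤ f y := hopt' y hyF hyε1
  have hflip : |f y - f x| ≤ Lf * ‖y - x‖ := hlip' y hyε3 x hxε3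
  have habs : f y - f x ≤ Lf * ‖y - x‖ := le_trans (le_abs_self _) hflip
  have hLα : Lf * ‖y - x‖ ≤ κ * residual g h G H x := by
    have h1 : ‖y - x‖ ≤ α * residual g h G H x := by rw [norm_sub_rev]; exact hxy
    have h2 : Lf * ‖y - x‖ ≤ Lf * (α * residual g h G H x) :=
      mul_le_mul_of_nonneg_left h1 hLf
    have h3 : Lf * (α * residual g h G H x) ≤ κ * residual g h G H x := by
      have := hrnn x
      nlinarith
    linarith
  have : f xb ≤ f x + κ * residual g h G H x := by linarith
  unfold Pen
  rw [hrxb]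
  linarith


end MPSC
end
end
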